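/- arXiv:2505.07098 — 3 statements merged into one kernel-verified Lean document; each statement's English description precedes it below -/
import Mathlib

section
/- Let N be a semistandard Young tableau of shape ν ⊢ n+1 with nonnegative entries, and suppose the maximal element of the multiset Dsp^c(N) is strictly less than n (in particular this holds if the entry sum of N is less than n). If additionally n > 2·i_max where i_max is that maximal element, then N = ι̂M for a unique partition λ ⊢ n and M ∈ SSYT(λ), where ι̂M is obtained from M by adding a box at the end of the first row, shifting the first row right by one, and placing 0 in the upper-left corner. In particular, if n > 2d then every N ∈ SSYT_d(ν) is of the form ι̂M with Σ(M) = d. -/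
open MvPolynomial

noncomputable section
open scoped Classical

namespace GHS

def entrySumF (μ : YoungDiagram) (f : ℕ → ℕ → ℕ) : ℕ := ∑ c ∈ μ.cells, f c.1 c.2

def entryFun {μ : YoungDiagram} (M : SemistandardYoungTableau μ) : ℕ → ℕ → ℕ := fun r c => M r c

def entrySum {μ : YoungDiagram} (M : SemistandardYoungTableau μ) : ℕ := entrySumF μ (entryFun M)

def entryMultisetF (μ : YoungDiagram) (f : ℕ → ℕ → ℕ) : Multiset ℕ :=
  μ.cells.val.map fun c => f c.1 c.2

def entryMultiset {μ : YoungDiagram} (M : SemistandardYoungTableau μ) : Multiset ℕ := entryMultisetF μ (entryFun M)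

def countLtF (μ : YoungDiagram) (f : ℕ → ℕ → ℕ) (h : ℕ) : ℕ :=
  (μ.cells.filter fun c => f c.1 c.2 < h).card

def countGe {μ : YoungDiagram} (M : SemistandardYoungTableau μ) (t : ℕ) : ℕ :=
  (μ.cells.filter fun c => t ≤ M c.1 c.2).card

def maxEntryF (μ : YoungDiagram) (f : ℕ → ℕ → ℕ) : ℕ := μ.cells.sup fun c => f c.1 c.2

def DspCF (n : ℕ) (μ : YoungDiagram) (f : ℕ → ℕ → ℕ) : Multiset ℕ :=
  (Finset.Icc 1 (maxEntryF μ f)).val.map fun h => n - countLtF μ f h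

def DspC (n : ℕ) {μ : YoungDiagram} (M : SemistandardYoungTableau μ) : Multiset ℕ := DspCF n μ (entryFun M)

def stdFun (μ : YoungDiagram) (f : ℕ → ℕ → ℕ) : ℕ → ℕ → ℕ := fun r c =>
  if (r, c) ∈ μ then
    (μ.cells.filter fun c' => f c'.1 c'.2 < f r c ∨ (f c'.1 c'.2 = f r c ∧ c'.2 < c)).card + 1
  else 0

def IsStandard (n : ℕ) {μ : YoungDiagram} (S : SemistandardYoungTableau μ) : Prop :=
  entryMultiset S = (Multiset.range n).map (· + 1)

def rowOfF (f : ℕ → ℕ → ℕ) (v : ℕ) : ℕ := sInf {r | ∃ c, f r c = v}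

def DsiSet (n : ℕ) {μ : YoungDiagram} (S : SemistandardYoungTableau μ) : Finset ℕ :=
  (Finset.Ioo 0 n).filter fun i => rowOfF (entryFun S) i < rowOfF (entryFun S) (i + 1)

def jseq (n k : ℕ) (J : Multiset ℕ) (h : ℕ) : ℕ :=
  if h = 0 then 0 else if h = k then n else (J.sort (· ≤ ·)).getD (h - 1) 0

def compFun (n k : ℕ) (J : Multiset ℕ) (h : ℕ) : ℕ := jseq n k J (h + 1) - jseq n k J h

def compMap (n k : ℕ) (J : Multiset ℕ) : Fin k → ℕ := fun h => compFun n k J (h : ℕ)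

def contentOfJ (n k : ℕ) (J : Multiset ℕ) : Multiset ℕ :=
  (Multiset.range k).bind fun h => Multiset.replicate (compFun n k J h) h

def IsTabloid (n : ℕ) (μ : YoungDiagram) (T : Fin n → ℕ × ℕ) : Prop :=
  Function.Injective T ∧ ∀ i, T i ∈ μ

def IsStdFill (n : ℕ) (T : Fin n → ℕ × ℕ) : Prop :=
  ∀ i j : Fin n,
    (((T i).1 = (T j).1 ∧ (T i).2 < (T j).2) ∨ ((T i).2 = (T j).2 ∧ (T i).1 < (T j).1)) → i < j

def rowGroup (n : ℕ) (T : Fin n → ℕ × ℕ) : Finset (Equiv.Perm (Fin n)) :=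
  Finset.univ.filter fun τ => ∀ i, (T (τ i)).1 = (T i).1

def colGroup (n : ℕ) (T : Fin n → ℕ × ℕ) : Finset (Equiv.Perm (Fin n)) :=
  Finset.univ.filter fun σ => ∀ i, (T (σ i)).2 = (T i).2

def pmonF (n : ℕ) (f : ℕ → ℕ → ℕ) (T : Fin n → ℕ × ℕ) : MvPolynomial (Fin n) ℚ :=
  ∏ i, X i ^ f (T i).1 (T i).2

def pexpF (n : ℕ) (f : ℕ → ℕ → ℕ) (T : Fin n → ℕ × ℕ) : Fin n →₀ ℕ :=
  Finsupp.equivFunOnFinite.symm fun i => f (T i).1 (T i).2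

def symRT (n : ℕ) (T : Fin n → ℕ × ℕ) (p : MvPolynomial (Fin n) ℚ) : MvPolynomial (Fin n) ℚ :=
  ∑ τ ∈ rowGroup n T, rename (⇑τ) p

def antisym (n : ℕ) (T : Fin n → ℕ × ℕ) (p : MvPolynomial (Fin n) ℚ) : MvPolynomial (Fin n) ℚ :=
  ∑ σ ∈ colGroup n T, ((Equiv.Perm.sign σ : ℤ) : ℚ) • rename (⇑σ) p

def youngSym (n : ℕ) (T : Fin n → ℕ × ℕ) (p : MvPolynomial (Fin n) ℚ) : MvPolynomial (Fin n) ℚ :=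
  antisym n T (symRT n T p)

def stabCardF (n : ℕ) (f : ℕ → ℕ → ℕ) (T : Fin n → ℕ × ℕ) : ℕ :=
  ((rowGroup n T).filter fun τ : Equiv.Perm (Fin n) => rename (⇑τ) (pmonF n f T) = pmonF n f T).card

def rowPoly (n : ℕ) (f : ℕ → ℕ → ℕ) (T : Fin n → ℕ × ℕ) : MvPolynomial (Fin n) ℚ :=
  (stabCardF n f T : ℚ)⁻¹ • symRT n T (pmonF n f T)

def FMTF (n : ℕ) (f : ℕ → ℕ → ℕ) (T : Fin n → ℕ × ℕ) : MvPolynomial (Fin n) ℚ :=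
  (stabCardF n f T : ℚ)⁻¹ • youngSym n T (pmonF n f T)

def FMT (n : ℕ) {μ : YoungDiagram} (M : SemistandardYoungTableau μ) (T : Fin n → ℕ × ℕ) : MvPolynomial (Fin n) ℚ :=
  FMTF n (entryFun M) T

def degT (n : ℕ) (T : Fin n → ℕ × ℕ) (d : Fin n →₀ ℕ) (j : ℕ) : ℕ :=
  ∑ i ∈ Finset.univ.filter fun i => (T i).2 = j, d i

def gtT (n : ℕ) (T : Fin n → ℕ × ℕ) (d e : Fin n →₀ ℕ) : Prop :=
  ∃ j, degT n T e j < degT n T d j ∧ ∀ j', j < j' → degT n T d j' = degT n T e j'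

def VMF (n : ℕ) (μ : YoungDiagram) (f : ℕ → ℕ → ℕ) : Submodule ℚ (MvPolynomial (Fin n) ℚ) :=
  Submodule.span ℚ {p | ∃ T, IsTabloid n μ T ∧ p = FMTF n f T}

def VM (n : ℕ) {μ : YoungDiagram} (M : SemistandardYoungTableau μ) : Submodule ℚ (MvPolynomial (Fin n) ℚ) :=
  VMF n μ (entryFun M)

def spechtP (n : ℕ) (T : Fin n → ℕ × ℕ) : MvPolynomial (Fin n) ℚ := ∏ i, X i ^ (T i).1

def SpechtSub (n : ℕ) (μ : YoungDiagram) : Submodule ℚ (MvPolynomial (Fin n) ℚ) :=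
  Submodule.span ℚ {p | ∃ T, IsTabloid n μ T ∧ p = youngSym n T (spechtP n T)}

def EqHoms (n : ℕ) (W V : Submodule ℚ (MvPolynomial (Fin n) ℚ)) :
    Submodule ℚ (W →ₗ[ℚ] MvPolynomial (Fin n) ℚ) where
  carrier := {g | (∀ x, g x ∈ V) ∧ ∀ (σ : Equiv.Perm (Fin n)) (x y : W),
      (y : MvPolynomial (Fin n) ℚ) = rename (⇑σ) (x : MvPolynomial (Fin n) ℚ) →
      g y = rename (⇑σ) (g x)}
  add_mem' := by
    rintro a b ⟨ha1, ha2⟩ ⟨hb1, hb2⟩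
    refine ⟨fun x => ?_, fun σ x y hxy => ?_⟩
    · simpa using V.add_mem (ha1 x) (hb1 x)
    · simp [LinearMap.add_apply, map_add, ha2 σ x y hxy, hb2 σ x y hxy]
  zero_mem' := ⟨fun x => by simp, fun σ x y hxy => by simp⟩
  smul_mem' := by
    rintro c a ⟨ha1, ha2⟩
    refine ⟨fun x => ?_, fun σ x y hxy => ?_⟩
    · simpa using V.smul_mem c (ha1 x)
    · simp [LinearMap.smul_apply, map_smul, ha2 σ x y hxy]

def multiplicityIn (n : ℕ) (W V : Submodule ℚ (MvPolynomial (Fin n) ℚ)) : ℕ :=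
  Module.finrank ℚ ↑(EqHoms n W V)

def contentSub (n : ℕ) (μc : Multiset ℕ) : Submodule ℚ (MvPolynomial (Fin n) ℚ) :=
  Submodule.span ℚ {p | ∃ d : Fin n → ℕ, Finset.univ.val.map d = μc ∧ p = ∏ i, X i ^ d i}

def padded (n : ℕ) (μc : Multiset ℕ) : Multiset ℕ :=
  μc + Multiset.replicate (n - Multiset.card μc) 0

def IsCocharge {μ : YoungDiagram} (C : SemistandardYoungTableau μ) : Prop :=
  ∀ h : ℕ, 0 < h → ∀ v ∈ μ.cells, C v.1 v.2 = h →
    (∀ v' ∈ μ.cells, C v'.1 v'.2 = h → v.2 ≤ v'.2) →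
    ∃ v'' ∈ μ.cells, C v''.1 v''.2 = h - 1 ∧ v''.1 < v.1

def updF (f : ℕ → ℕ → ℕ) (r c v : ℕ) : ℕ → ℕ → ℕ :=
  fun r' c' => if r' = r ∧ c' = c then v else f r' c'

def slide : ℕ → (ℕ → ℕ → ℕ) → ℕ × ℕ → (ℕ → ℕ → ℕ) × (ℕ × ℕ)
  | 0, f, p => (f, p)
  | fuel + 1, f, (r, c) =>
    let down := f (r + 1) c
    let right := f r (c + 1)
    if down = 0 ∧ right = 0 then (f, (r, c))
    else if right = 0 ∨ (down ≠ 0 ∧ down < right) then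
      slide fuel (updF (updF f r c down) (r + 1) c 0) (r + 1, c)
    else
      slide fuel (updF (updF f r c right) r (c + 1) 0) (r, c + 1)

def evacAux : ℕ → (ℕ → ℕ → ℕ) → ℕ → ℕ → ℕ
  | 0, _ => fun _ _ => 0
  | m + 1, f =>
    let gp := slide (m + 1) (updF f 0 0 0) (0, 0)
    updF (evacAux m gp.1) gp.2.1 gp.2.2 (m + 1)

def ctJfun (J : Multiset ℕ) (f : ℕ → ℕ → ℕ) : ℕ → ℕ → ℕ :=
  fun r c => J.countP fun j => j < f r c

def JminF (μ : YoungDiagram) (f : ℕ → ℕ → ℕ) : Multiset ℕ :=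
  (Finset.Icc 1 (maxEntryF μ f)).val.map fun h => countLtF μ f h

def deltaOne (n : ℕ) (μ : YoungDiagram) (f : ℕ → ℕ → ℕ) (v : ℕ × ℕ) : Prop :=
  ¬ (rowOfF (evacAux n (stdFun μ f)) n < v.1)

def hatAdd (n : ℕ) (μ : YoungDiagram) (f : ℕ → ℕ → ℕ) (v : ℕ × ℕ) : ℕ → ℕ → ℕ :=
  let Sv := evacAux (n + 1) (updF (evacAux n (stdFun μ f)) v.1 v.2 (n + 1))
  let Jp : Multiset ℕ := (JminF μ f).map (· + 1)
  if deltaOne n μ f v then ctJfun Jp Sv else ctJfun (1 ::ₘ Jp) Sv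

def iotaHatFun (f : ℕ → ℕ → ℕ) : ℕ → ℕ → ℕ :=
  fun r c => if r = 0 then (if c = 0 then 0 else f 0 (c - 1)) else f r c

def iotaT (n : ℕ) (lam : YoungDiagram) (T : Fin n → ℕ × ℕ) : Fin (n + 1) → ℕ × ℕ :=
  fun i => if h : (i : ℕ) < n then T ⟨(i : ℕ), h⟩ else (0, lam.rowLen 0)

def plusOneF (μ : YoungDiagram) (f : ℕ → ℕ → ℕ) : ℕ → ℕ → ℕ :=
  fun r c => if (r, c) ∈ μ then f r c + 1 else 0

def Omega (n : ℕ) (α : ℕ → ℕ) :=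
  {w : Fin n → ℕ // ∀ h, (Finset.univ.filter fun i => w i = h).card = α h}

def shiftW (n : ℕ) (α : ℕ → ℕ) (σ : Equiv.Perm (Fin n)) (w : Omega n α) : Omega n α :=
  ⟨fun i => w.1 (σ.symm i), by
    intro h
    have key : (Finset.univ.filter fun i => w.1 (σ.symm i) = h)
        = (Finset.univ.filter fun i => w.1 i = h).image σ := by
      ext i
      simp only [Finset.mem_filter, Finset.mem_univ, true_and, Finset.mem_image]
      constructor
      · intro hi
        exact ⟨σ.symm i, hi, Equiv.apply_symm_apply σ i⟩
      · rintro ⟨j, hj, rfl⟩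
        simpa using hj
    rw [key, Finset.card_image_of_injective _ σ.injective]
    exact w.2 h⟩

def permOmega (n : ℕ) (α : ℕ → ℕ) (σ : Equiv.Perm (Fin n)) : Omega n α ≃ Omega n α where
  toFun := shiftW n α σ
  invFun := shiftW n α σ⁻¹
  left_inv w := by
    apply Subtype.ext
    funext i
    simp [shiftW, Equiv.Perm.inv_def]
  right_inv w := by
    apply Subtype.ext
    funext i
    simp [shiftW, Equiv.Perm.inv_def]

def ExtPart (n d : ℕ) : Submodule ℚ (MvPolynomial (Fin (n + 1)) ℚ) :=
  ⨆ (lam : YoungDiagram) (_ : lam.card = n) (M : SemistandardYoungTableau lam) (_ : entrySum M = d)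
    (v : ℕ × ℕ) (_ : v ∉ lam.cells) (ν : YoungDiagram) (_ : ν.cells = insert v lam.cells)
    (_ : deltaOne n lam (entryFun M) v),
    VMF (n + 1) ν (hatAdd n lam (entryFun M) v)

def LEPart (n d : ℕ) : Submodule ℚ (MvPolynomial (Fin (n + 1)) ℚ) :=
  ⨆ (lam : YoungDiagram) (_ : lam.card = n) (M : SemistandardYoungTableau lam) (_ : entrySum M + n = d)
    (v : ℕ × ℕ) (_ : v ∉ lam.cells) (ν : YoungDiagram) (_ : ν.cells = insert v lam.cells)
    (_ : ¬ deltaOne n lam (entryFun M) v),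
    VMF (n + 1) ν (hatAdd n lam (entryFun M) v)

def EPart (n d : ℕ) : Submodule ℚ (MvPolynomial (Fin (n + 1)) ℚ) :=
  ⨆ (e : ℕ) (_ : e + (n + 1) = d),
    (homogeneousSubmodule (Fin (n + 1)) ℚ e).map
      (LinearMap.mulLeft ℚ (∏ i : Fin (n + 1), (X i : MvPolynomial (Fin (n + 1)) ℚ)))

/-!
All zeros of `N` lie in its first row, where they form an initial segment, while the second row
consists of positive entries. The hypothesis on `Dsp^c(N)` says that fewer than `n / 2` entries
are positive, so there are more zeros than cells in the second row. Hence the first row of `N`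
starts with `0` and continues with zeros above the whole second row: deleting that leading `0`
and shifting the rest of the first row left gives a semistandard tableau `M` with `N = ι̂M`.
Uniqueness holds because `ι̂` is injective on entry functions.
-/

def iotaHatInvFun (f : ℕ → ℕ → ℕ) : ℕ → ℕ → ℕ :=
  fun r c => if r = 0 then f 0 (c + 1) else f r c

theorem iotaHatInvFun_iotaHatFun (f : ℕ → ℕ → ℕ) : iotaHatInvFun (iotaHatFun f) = f := by
  funext r c
  by_cases hr : r = 0 <;> simp [iotaHatInvFun, iotaHatFun, hr]

theorem iotaHatFun_iotaHatInvFun {f : ℕ → ℕ → ℕ} (hf : f 0 0 = 0) :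
    iotaHatFun (iotaHatInvFun f) = f := by
  funext r c
  rcases r with _ | r
  · rcases c with _ | c <;> simp [iotaHatFun, iotaHatInvFun, hf]
  · simp [iotaHatFun, iotaHatInvFun]

def eraseFirstRowEnd (ν : YoungDiagram) (h : ν.rowLen 1 < ν.rowLen 0) : YoungDiagram where
  cells := ν.cells.erase (0, ν.rowLen 0 - 1)
  isLowerSet := by
    rintro ⟨i, j⟩ ⟨i', j'⟩ hle hmem
    simp only [Finset.coe_erase, Set.mem_sdiff, Finset.mem_coe, YoungDiagram.mem_cells,
      Set.mem_singleton_iff, Prod.mk.injEq] at hmem ⊢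
    refine ⟨ν.isLowerSet hle hmem.1, ?_⟩
    rintro ⟨rfl, rfl⟩
    have hj := (Prod.mk_le_mk.1 hle).2
    have hj' := YoungDiagram.mem_iff_lt_rowLen.1 hmem.1
    rcases Nat.eq_zero_or_pos i with rfl | hi'
    · exact hmem.2 ⟨rfl, by omega⟩
    · have := ν.rowLen_anti 1 i hi'
      omega

section eraseFirstRowEnd

variable {ν : YoungDiagram} (h : ν.rowLen 1 < ν.rowLen 0)

theorem mem_eraseFirstRowEnd_zero {c : ℕ} :
    (0, c) ∈ eraseFirstRowEnd ν h ↔ (0, c + 1) ∈ ν := by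
  change (0, c) ∈ ν.cells.erase _ ↔ _
  simp only [Finset.mem_erase, YoungDiagram.mem_cells, YoungDiagram.mem_iff_lt_rowLen, ne_eq,
    Prod.mk.injEq, true_and]
  omega

theorem mem_eraseFirstRowEnd_of_ne_zero {r c : ℕ} (hr : r ≠ 0) :
    (r, c) ∈ eraseFirstRowEnd ν h ↔ (r, c) ∈ ν := by
  change (r, c) ∈ ν.cells.erase _ ↔ _
  simp [hr]

theorem rowLen_eraseFirstRowEnd_zero : (eraseFirstRowEnd ν h).rowLen 0 = ν.rowLen 0 - 1 :=
  eq_of_forall_lt_iff fun c => by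
    rw [← YoungDiagram.mem_iff_lt_rowLen, mem_eraseFirstRowEnd_zero,
      YoungDiagram.mem_iff_lt_rowLen]
    omega

theorem cells_eq_insert_eraseFirstRowEnd :
    ν.cells = insert (0, (eraseFirstRowEnd ν h).rowLen 0) (eraseFirstRowEnd ν h).cells := by
  rw [rowLen_eraseFirstRowEnd_zero]
  refine (Finset.insert_erase ?_).symm
  rw [YoungDiagram.mem_cells, YoungDiagram.mem_iff_lt_rowLen]
  omega

theorem card_eraseFirstRowEnd : (eraseFirstRowEnd ν h).card + 1 = ν.card := by
  rw [YoungDiagram.card, YoungDiagram.card, cells_eq_insert_eraseFirstRowEnd h,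
    Finset.card_insert_of_notMem]
  rw [YoungDiagram.mem_cells, YoungDiagram.mem_iff_lt_rowLen]
  exact lt_irrefl _

end eraseFirstRowEnd

section Tableau

variable {ν : YoungDiagram} (N : SemistandardYoungTableau ν)

theorem eq_zero_of_mem_of_entry_eq_zero {r c : ℕ} (hrc : (r, c) ∈ ν) (hzero : N r c = 0) :
    r = 0 := by
  by_contra hr
  have := N.col_strict (Nat.pos_of_ne_zero hr) hrc
  omega

theorem entry_zero_zero_eq_zero {c : ℕ} (hmem : (0, c) ∈ ν) (hzero : N 0 c = 0) : N 0 0 = 0 :=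
  Nat.eq_zero_of_le_zero ((N.row_weak_of_le (Nat.zero_le c) hmem).trans_eq hzero)

/-- The zero entries of `N` fill an initial segment of its first row. -/
theorem mem_and_eq_zero_of_lt_countLtF_one {c : ℕ} (hc : c < countLtF ν (entryFun N) 1) :
    (0, c) ∈ ν ∧ N 0 c = 0 := by
  by_contra hc'
  have hzeros :
      ∀ p ∈ ν.cells.filter (fun p => entryFun N p.1 p.2 < 1), p.1 = 0 ∧ p.2 < c := by
    rintro ⟨r, c'⟩ hp
    simp only [Finset.mem_filter, YoungDiagram.mem_cells, entryFun, Nat.lt_one_iff] at hp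
    obtain rfl := eq_zero_of_mem_of_entry_eq_zero N hp.1 hp.2
    refine ⟨rfl, Nat.lt_of_not_le fun hle => hc' ⟨ν.isLowerSet ?_ hp.1, ?_⟩⟩
    · exact Prod.mk_le_mk.2 ⟨le_rfl, hle⟩
    · exact Nat.eq_zero_of_le_zero ((N.row_weak_of_le hle hp.1).trans_eq hp.2)
  have : countLtF ν (entryFun N) 1 ≤ c := by
    simpa [countLtF] using Finset.card_le_card_of_injOn Prod.snd
      (fun p hp => Finset.mem_range.2 (hzeros p hp).2)
      (fun p hp q hq hpq => Prod.ext ((hzeros p hp).1.trans (hzeros q hq).1.symm) hpq)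
  omega

theorem rowLen_one_add_countLtF_one_le_card :
    ν.rowLen 1 + countLtF ν (entryFun N) 1 ≤ ν.card := by
  have hdisj : Disjoint (ν.row 1) (ν.cells.filter fun p => entryFun N p.1 p.2 < 1) := by
    refine Finset.disjoint_left.2 fun p hrow hzero => ?_
    rw [YoungDiagram.mem_row_iff] at hrow
    simp only [Finset.mem_filter, entryFun, Nat.lt_one_iff] at hzero
    have := eq_zero_of_mem_of_entry_eq_zero N hrow.1 hzero.2
    omega
  rw [ν.rowLen_eq_card, countLtF, ← Finset.card_union_of_disjoint hdisj]
  refine Finset.card_le_card (Finset.union_subset (fun p hp => ?_) (Finset.filter_subset _ _))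
  exact (YoungDiagram.mem_cells p).2 (YoungDiagram.mem_row_iff.1 hp).1

end Tableau

theorem sub_countLtF_mem_DspCF {n h : ℕ} {μ : YoungDiagram} {f : ℕ → ℕ → ℕ}
    (h1 : 1 ≤ h) (hh : h ≤ maxEntryF μ f) : n - countLtF μ f h ∈ DspCF n μ f :=
  Multiset.mem_map.2 ⟨h, Finset.mem_Icc.2 ⟨h1, hh⟩, rfl⟩

theorem countLtF_eq_card_of_maxEntryF_lt {μ : YoungDiagram} {f : ℕ → ℕ → ℕ} {h : ℕ}
    (hh : maxEntryF μ f < h) : countLtF μ f h = μ.card :=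
  congrArg Finset.card (Finset.filter_true_of_mem fun _ hp =>
    (Finset.le_sup (f := fun p : ℕ × ℕ => f p.1 p.2) hp).trans_lt hh)

/-- The term of `Dsp^c(N)` for the entry value `1` is the number `p` of positive entries of `N`;
the second row has at most `p` cells and there are `n + 1 - p` zeros. -/
theorem rowLen_one_lt_countLtF_one {n : ℕ} {ν : YoungDiagram} (N : SemistandardYoungTableau ν)
    (hcard : ν.card = n + 1) (hbig : ∀ i ∈ DspC (n + 1) N, 2 * i < n) :
    ν.rowLen 1 < countLtF ν (entryFun N) 1 := by
  have hrow := rowLen_one_add_countLtF_one_le_card N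
  rcases Nat.lt_or_ge (maxEntryF ν (entryFun N)) 1 with hmax | hmax
  · rw [countLtF_eq_card_of_maxEntryF_lt hmax] at hrow ⊢
    omega
  · have := hbig _ (sub_countLtF_mem_DspCF le_rfl hmax)
    omega

section IotaHatInv

/-- Shifting the first row left keeps the columns strictly increasing because `N` vanishes on the
first `ν.rowLen 1 + 1` cells of its first row. -/
def iotaHatInv {ν : YoungDiagram} (N : SemistandardYoungTableau ν)
    (hmem : (0, ν.rowLen 1) ∈ ν) (hzero : N 0 (ν.rowLen 1) = 0) :
    SemistandardYoungTableau (eraseFirstRowEnd ν (YoungDiagram.mem_iff_lt_rowLen.1 hmem)) where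
  entry := iotaHatInvFun (entryFun N)
  row_weak' {i j1 j2} hj hcell := by
    rcases eq_or_ne i 0 with rfl | hi
    · exact N.row_weak (Nat.succ_lt_succ hj) ((mem_eraseFirstRowEnd_zero _).1 hcell)
    · simp only [iotaHatInvFun, entryFun, if_neg hi]
      exact N.row_weak hj ((mem_eraseFirstRowEnd_of_ne_zero _ hi).1 hcell)
  col_strict' {i1 i2 j} hi hcell := by
    have hi2 : i2 ≠ 0 := by omega
    have hcell' := (mem_eraseFirstRowEnd_of_ne_zero _ hi2).1 hcell
    rcases eq_or_ne i1 0 with rfl | hi1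
    · have hj : j + 1 ≤ ν.rowLen 1 :=
        YoungDiagram.mem_iff_lt_rowLen.1 <|
          ν.isLowerSet (Prod.mk_le_mk.2 ⟨Nat.one_le_iff_ne_zero.2 hi2, le_rfl⟩) hcell'
      have hzero' : N 0 (j + 1) = 0 :=
        Nat.eq_zero_of_le_zero ((N.row_weak_of_le hj hmem).trans_eq hzero)
      have := N.col_strict (Nat.pos_of_ne_zero hi2) hcell'
      simp only [iotaHatInvFun, entryFun, if_neg hi2, ↓reduceIte]
      omega
    · simp only [iotaHatInvFun, entryFun, if_neg hi1, if_neg hi2]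
      exact N.col_strict hi hcell'
  zeros' {i j} hcell := by
    rcases eq_or_ne i 0 with rfl | hi
    · exact N.zeros (mt (mem_eraseFirstRowEnd_zero _).2 hcell)
    · simp only [iotaHatInvFun, entryFun, if_neg hi]
      exact N.zeros (mt (mem_eraseFirstRowEnd_of_ne_zero _ hi).2 hcell)

variable {ν : YoungDiagram} (N : SemistandardYoungTableau ν) (hmem : (0, ν.rowLen 1) ∈ ν)
  (hzero : N 0 (ν.rowLen 1) = 0)

theorem entryFun_iotaHatInv :
    entryFun (iotaHatInv N hmem hzero) = iotaHatInvFun (entryFun N) :=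
  rfl

theorem iotaHatFun_entryFun_iotaHatInv :
    iotaHatFun (entryFun (iotaHatInv N hmem hzero)) = entryFun N :=
  iotaHatFun_iotaHatInvFun (entry_zero_zero_eq_zero N hmem hzero)

theorem entrySum_iotaHatInv : entrySum (iotaHatInv N hmem hzero) = entrySum N := by
  rw [entrySum, entrySum, entrySumF, entrySumF, entryFun_iotaHatInv,
    ← Finset.sum_erase (f := fun p : ℕ × ℕ => entryFun N p.1 p.2) (a := (0, 0))
      _ (entry_zero_zero_eq_zero N hmem hzero)]
  refine Finset.sum_nbij' (fun p => if p.1 = 0 then (0, p.2 + 1) else p)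
    (fun q => if q.1 = 0 then (0, q.2 - 1) else q) ?_ ?_ ?_ ?_ ?_
  · rintro ⟨_ | r, c⟩ hp
    · simpa [mem_eraseFirstRowEnd_zero] using hp
    · simpa [mem_eraseFirstRowEnd_of_ne_zero] using hp
  · rintro ⟨_ | r, _ | c⟩ hq
    · simp at hq
    · simpa [mem_eraseFirstRowEnd_zero] using hq
    all_goals simpa [mem_eraseFirstRowEnd_of_ne_zero] using hq
  · rintro ⟨_ | r, c⟩ _ <;> simp
  · rintro ⟨_ | r, _ | c⟩ hq <;> simp_all
  · rintro ⟨_ | r, c⟩ _ <;> simp [iotaHatInvFun]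

end IotaHatInv

theorem stmt16_general (n : ℕ) (ν : YoungDiagram) (hcard : ν.card = n + 1)
    (N : SemistandardYoungTableau ν)
    (hbig : ∀ i ∈ DspC (n + 1) N, 2 * i < n) :
    ∃! f : ℕ → ℕ → ℕ,
      (∃ (lam : YoungDiagram) (M : SemistandardYoungTableau lam), lam.card = n ∧
        ν.cells = insert (0, lam.rowLen 0) lam.cells ∧ f = entryFun M ∧
        entrySum M = entrySum N) ∧
      ∀ r c, N r c = iotaHatFun f r c := by
  obtain ⟨hmem, hzero⟩ :=
    mem_and_eq_zero_of_lt_countLtF_one N (rowLen_one_lt_countLtF_one N hcard hbig)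
  have hlt : ν.rowLen 1 < ν.rowLen 0 := YoungDiagram.mem_iff_lt_rowLen.1 hmem
  refine ⟨entryFun (iotaHatInv N hmem hzero),
    ⟨⟨_, _, ?_, cells_eq_insert_eraseFirstRowEnd hlt, rfl, entrySum_iotaHatInv N hmem hzero⟩,
      fun r c => congrFun₂ (iotaHatFun_entryFun_iotaHatInv N hmem hzero).symm r c⟩, ?_⟩
  · have := card_eraseFirstRowEnd hlt
    omega
  · rintro f ⟨-, hf⟩
    rw [entryFun_iotaHatInv, ← iotaHatInvFun_iotaHatFun f]
    exact congrArg iotaHatInvFun (funext₂ hf).symm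

theorem stmt16 (n : ℕ) (hn : 1 ≤ n) (ν : YoungDiagram) (hcard : ν.card = n + 1)
    (N : SemistandardYoungTableau ν)
    (hmax : ∀ i ∈ DspC (n + 1) N, i < n)
    (hbig : ∀ i ∈ DspC (n + 1) N, 2 * i < n) :
    ∃! f : ℕ → ℕ → ℕ,
      (∃ (lam : YoungDiagram) (M : SemistandardYoungTableau lam), lam.card = n ∧
        ν.cells = insert (0, lam.rowLen 0) lam.cells ∧ f = entryFun M ∧
        entrySum M = entrySum N) ∧
      ∀ r c, N r c = iotaHatFun f r c :=
  stmt16_general n ν hcard N hbig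
end GHS
end
end

section
/- Let λ ⊢ n, let M be a semistandard tableau of shape λ with nonnegative entries, and let T be a tableau of shape λ with content {1,...,n}. Let ιT be the tableau of shape λ₊ (λ with a box added at the end of the first row) obtained by placing n+1 in the new box, and ι̂M the semistandard tableau of shape λ₊ obtained by shifting the first row of M right and placing 0 in the upper-left corner. Then F_{ι̂M, ιT} = ε_{ιT}(p_{M,T}) / s_{ι̂M,ιT}, and substituting x_{n+1} = 0 into F_{ι̂M,ιT} yields F_{M,T}. -/
open MvPolynomial

noncomputable section
open scoped Classical

namespace GHS

/-!
The filling `ιT` adds to `T` one box in row `0` whose column holds no other box. Cycling the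
first row of `ιT` is a row permutation that turns the monomial of `ι̂M` into `p_{M,T}` read in
`n + 1` variables; row symmetrization absorbs row permutations, which gives the first identity.

For the second one, the column group of `ιT` is that of `T`, so setting `x_{n+1} = 0` commutes
with antisymmetrization. Writing a row permutation `ρ` of `ιT` as
`extendLast τ * swap (last n) (ρ⁻¹ (last n))`, the substitution keeps exactly the terms in
which the swap exchanges `x_{n+1}` with a variable of exponent `0` in row `0`. With `c` such
variables, the row symmetrization of `p_{M,T}` over `ιT` goes to `c` times its row
symmetrization over `T`, and the same decomposition multiplies the stabilizer order by `c`, so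
the normalized orbit sums agree.
-/

open Equiv (Perm swap)
open scoped Finset

section Monomial

variable {ι R : Type*} [Fintype ι] [CommSemiring R]

lemma rename_prod_X_pow (σ : Perm ι) (a : ι → ℕ) :
    rename σ (∏ i, X i ^ a i : MvPolynomial ι R) = ∏ i, X i ^ a (σ.symm i) := by
  simp only [map_prod, map_pow, rename_X]
  exact Fintype.prod_equiv σ _ _ fun i => by simp

lemma rename_swap_prod_X_pow [DecidableEq ι] (a : ι → ℕ) {i j : ι} (h : a i = a j) :
    rename (swap i j) (∏ k, X k ^ a k : MvPolynomial ι R) = ∏ k, X k ^ a k := by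
  rw [rename_prod_X_pow]
  refine Finset.prod_congr rfl fun k _ => ?_
  rw [Equiv.symm_swap, Equiv.swap_apply_def]
  split_ifs <;> simp_all

lemma rename_castSucc_prod_X_pow {n : ℕ} (a : Fin (n + 1) → ℕ) (ha : a (Fin.last n) = 0) :
    rename Fin.castSucc (∏ i, X i ^ a i.castSucc : MvPolynomial (Fin n) R) =
      ∏ j, X j ^ a j := by
  simp [Fin.prod_univ_castSucc, ha]

end Monomial

lemma exists_perm_comp_eq {ι α : Type*} [Finite ι] {T : ι → α} (hT : Function.Injective T)
    {π : α → α} (hπ : Function.Injective π) (hmaps : ∀ i, ∃ j, T j = π (T i)) :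
    ∃ τ : Perm ι, ∀ i, T (τ i) = π (T i) := by
  choose g hg using hmaps
  have hg_inj : Function.Injective g := fun i j h => hT (hπ (by rw [← hg, ← hg, h]))
  exact ⟨Equiv.ofBijective g (Finite.injective_iff_bijective.mp hg_inj), hg⟩

section ExtendLast

def extendLast (n : ℕ) : Perm (Fin n) →* Perm (Fin (n + 1)) :=
  Equiv.Perm.viaEmbeddingHom Fin.castSuccEmb

variable {n : ℕ}

@[simp]
lemma extendLast_castSucc (τ : Perm (Fin n)) (i : Fin n) :
    extendLast n τ i.castSucc = (τ i).castSucc :=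
  Equiv.Perm.viaEmbedding_apply τ Fin.castSuccEmb i

@[simp]
lemma extendLast_last (τ : Perm (Fin n)) : extendLast n τ (Fin.last n) = Fin.last n :=
  Equiv.Perm.viaEmbedding_apply_of_notMem τ _ _ fun ⟨i, hi⟩ => Fin.castSucc_ne_last i hi

lemma extendLast_injective : Function.Injective (extendLast n) :=
  Equiv.Perm.viaEmbeddingHom_injective _

@[simp]
lemma sign_extendLast (τ : Perm (Fin n)) :
    Equiv.Perm.sign (extendLast n τ) = Equiv.Perm.sign τ := by
  simp only [extendLast, Equiv.Perm.viaEmbeddingHom_apply, Equiv.Perm.viaEmbedding,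
    Equiv.Perm.extendDomain, Equiv.Perm.sign_subtypeCongr, Equiv.Perm.sign_permCongr,
    Equiv.Perm.sign_refl, mul_one]

lemma extendLast_comp_castSucc (τ : Perm (Fin n)) :
    ⇑(extendLast n τ) ∘ Fin.castSucc = Fin.castSucc ∘ τ :=
  funext (extendLast_castSucc τ)

lemma exists_extendLast_eq {σ : Perm (Fin (n + 1))} (h : σ (Fin.last n) = Fin.last n) :
    ∃ τ, extendLast n τ = σ := by
  have hne : ∀ g : Perm (Fin (n + 1)), g (Fin.last n) = Fin.last n →
      ∀ i : Fin n, g i.castSucc ≠ Fin.last n :=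
    fun g hg i hi => Fin.castSucc_ne_last i (g.injective (hi.trans hg.symm))
  have h' : σ⁻¹ (Fin.last n) = Fin.last n := by rw [Equiv.Perm.inv_eq_iff_eq, h]
  refine ⟨⟨fun i => (σ i.castSucc).castPred (hne σ h i),
    fun i => (σ⁻¹ i.castSucc).castPred (hne _ h' i),
    fun i => by simp, fun i => by simp⟩, ?_⟩
  ext j
  cases j using Fin.lastCases <;> simp [h]

end ExtendLast

section LabelPerms

def labelPerms {N : ℕ} (r : Fin N → ℕ) : Finset (Perm (Fin N)) :=
  Finset.univ.filter fun σ => ∀ i, r (σ i) = r i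

lemma rowGroup_eq_labelPerms (N : ℕ) (T : Fin N → ℕ × ℕ) :
    rowGroup N T = labelPerms fun i => (T i).1 := rfl

lemma colGroup_eq_labelPerms (N : ℕ) (T : Fin N → ℕ × ℕ) :
    colGroup N T = labelPerms fun i => (T i).2 := rfl

variable {N : ℕ} {r : Fin N → ℕ} {σ τ : Perm (Fin N)}

lemma mem_labelPerms : σ ∈ labelPerms r ↔ ∀ i, r (σ i) = r i := by
  simp [labelPerms]

lemma mul_mem_labelPerms (hσ : σ ∈ labelPerms r) (hτ : τ ∈ labelPerms r) :
    σ * τ ∈ labelPerms r :=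
  mem_labelPerms.mpr fun i => by
    rw [Equiv.Perm.mul_apply, mem_labelPerms.mp hσ, mem_labelPerms.mp hτ]

lemma inv_mem_labelPerms (hσ : σ ∈ labelPerms r) : σ⁻¹ ∈ labelPerms r :=
  mem_labelPerms.mpr fun i => by
    simpa using (mem_labelPerms.mp hσ (σ⁻¹ i)).symm

lemma swap_mem_labelPerms {a b : Fin N} (h : r a = r b) : swap a b ∈ labelPerms r :=
  mem_labelPerms.mpr fun i => by
    rcases eq_or_ne i a with rfl | hia
    · simp [h]
    rcases eq_or_ne i b with rfl | hib
    · simp [h]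
    · rw [Equiv.swap_apply_of_ne_of_ne hia hib]

lemma sum_labelPerms_mul_right {M : Type*} [AddCommMonoid M] (G : Perm (Fin N) → M)
    (hτ : τ ∈ labelPerms r) :
    ∑ ρ ∈ labelPerms r, G (ρ * τ) = ∑ ρ ∈ labelPerms r, G ρ :=
  Finset.sum_nbij' (· * τ) (· * τ⁻¹) (fun _ hρ => mul_mem_labelPerms hρ hτ)
    (fun _ hρ => mul_mem_labelPerms hρ (inv_mem_labelPerms hτ))
    (fun ρ _ => mul_inv_cancel_right ρ τ) (fun ρ _ => inv_mul_cancel_right ρ τ) fun _ _ => rfl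

lemma card_filter_labelPerms_conj {P Q : Perm (Fin N) → Prop} [DecidablePred P]
    [DecidablePred Q] (hτ : τ ∈ labelPerms r) (hPQ : ∀ ρ, Q ρ ↔ P (τ⁻¹ * ρ * τ)) :
    #{ρ ∈ labelPerms r | Q ρ} = #{ρ ∈ labelPerms r | P ρ} := by
  refine Finset.card_nbij' (fun ρ => τ⁻¹ * ρ * τ) (fun ρ => τ * ρ * τ⁻¹) ?_ ?_ ?_ ?_
  · intro ρ hρ
    simp only [Finset.mem_coe, Finset.mem_filter] at hρ ⊢
    exact ⟨mul_mem_labelPerms (mul_mem_labelPerms (inv_mem_labelPerms hτ) hρ.1) hτ,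
      (hPQ ρ).mp hρ.2⟩
  · intro ρ hρ
    simp only [Finset.mem_coe, Finset.mem_filter] at hρ ⊢
    refine ⟨mul_mem_labelPerms (mul_mem_labelPerms hτ hρ.1) (inv_mem_labelPerms hτ), ?_⟩
    simpa [hPQ, mul_assoc] using hρ.2
  · intro ρ _
    simp [mul_assoc]
  · intro ρ _
    simp [mul_assoc]

variable {n : ℕ}

lemma extendLast_mem_labelPerms {r : Fin (n + 1) → ℕ} {τ : Perm (Fin n)} :
    extendLast n τ ∈ labelPerms r ↔ τ ∈ labelPerms (r ∘ Fin.castSucc) := by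
  simp [mem_labelPerms, Fin.forall_fin_succ']

/-- Every `ρ` splits uniquely as `extendLast n τ * swap (last n) (ρ⁻¹ (last n))`. -/
lemma sum_labelPerms_succ {M : Type*} [AddCommMonoid M] (r : Fin (n + 1) → ℕ)
    (G : Perm (Fin (n + 1)) → M) :
    ∑ ρ ∈ labelPerms r, G ρ =
      ∑ j with r j = r (Fin.last n),
        ∑ τ ∈ labelPerms (r ∘ Fin.castSucc), G (extendLast n τ * swap (Fin.last n) j) := by
  have inv_apply_last :
      ∀ j τ, (extendLast n τ * swap (Fin.last n) j)⁻¹ (Fin.last n) = j := by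
    intro j τ
    rw [mul_inv_rev, Equiv.swap_inv, ← map_inv, Equiv.Perm.mul_apply, extendLast_last,
      Equiv.swap_apply_left]
  rw [← Finset.sum_product']
  symm
  refine Finset.sum_nbij (fun x => extendLast n x.2 * swap (Fin.last n) x.1) ?_ ?_ ?_
    fun _ _ => rfl
  · rintro ⟨j, τ⟩ hx
    simp only [Finset.mem_product, Finset.mem_filter, Finset.mem_univ, true_and] at hx
    exact mul_mem_labelPerms (extendLast_mem_labelPerms.mpr hx.2) (swap_mem_labelPerms hx.1.symm)
  · rintro ⟨j, τ⟩ _ ⟨j', τ'⟩ _ h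
    simp only at h
    have hj : j = j' := by rw [← inv_apply_last j τ, h, inv_apply_last]
    subst hj
    rw [extendLast_injective (mul_right_cancel h)]
  · intro ρ hρ
    have hρ' := Finset.mem_coe.mp hρ
    set j := ρ⁻¹ (Fin.last n)
    have hj : r j = r (Fin.last n) := by
      simpa [j] using mem_labelPerms.mp (inv_mem_labelPerms hρ') (Fin.last n)
    obtain ⟨τ, hτ⟩ := exists_extendLast_eq (σ := ρ * swap (Fin.last n) j) (by simp [j])
    have hτmem : τ ∈ labelPerms (r ∘ Fin.castSucc) := by
      rw [← extendLast_mem_labelPerms, hτ]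
      exact mul_mem_labelPerms hρ' (swap_mem_labelPerms hj.symm)
    refine ⟨(j, τ), by simp [hj, hτmem], ?_⟩
    simp [hτ, mul_assoc]

end LabelPerms

section EvalLastZero

variable {n : ℕ} {R : Type*} [CommSemiring R]

def evalLastZero (n : ℕ) : MvPolynomial (Fin (n + 1)) R →ₐ[R] MvPolynomial (Fin n) R :=
  aeval fun i => if h : (i : ℕ) < n then X ⟨i, h⟩ else 0

@[simp]
lemma evalLastZero_X_castSucc (i : Fin n) :
    evalLastZero n (X i.castSucc : MvPolynomial (Fin (n + 1)) R) = X i := by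
  simp [evalLastZero]

@[simp]
lemma evalLastZero_X_last : evalLastZero n (X (Fin.last n) : MvPolynomial (Fin (n + 1)) R) = 0 := by
  simp [evalLastZero]

lemma evalLastZero_rename_extendLast (τ : Perm (Fin n)) (p : MvPolynomial (Fin (n + 1)) R) :
    evalLastZero n (rename (extendLast n τ) p) = rename τ (evalLastZero n p) := by
  have h : (evalLastZero n).comp (rename (extendLast n τ)) =
      (rename (R := R) τ).comp (evalLastZero n) :=
    algHom_ext fun j => by cases j using Fin.lastCases <;> simp
  exact DFunLike.congr_fun h p

lemma evalLastZero_prod_X_pow (a : Fin (n + 1) → ℕ) :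
    evalLastZero n (∏ j, X j ^ a j : MvPolynomial (Fin (n + 1)) R) =
      if a (Fin.last n) = 0 then ∏ i, X i ^ a i.castSucc else 0 := by
  rw [map_prod, Fin.prod_univ_castSucc]
  split_ifs with h <;> simp [h]

lemma evalLastZero_rename_swap (a : Fin (n + 1) → ℕ) (ha : a (Fin.last n) = 0)
    (j : Fin (n + 1)) :
    evalLastZero n (rename (swap (Fin.last n) j) (∏ k, X k ^ a k : MvPolynomial _ R)) =
      if a j = 0 then ∏ i, X i ^ a i.castSucc else 0 := by
  by_cases hj : a j = 0
  · rw [rename_swap_prod_X_pow a (ha.trans hj.symm), evalLastZero_prod_X_pow, if_pos ha, if_pos hj]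
  · rw [rename_prod_X_pow, evalLastZero_prod_X_pow]
    simp [hj]

end EvalLastZero

section RowOrbitSum

/-- For a monomial `P` this is the sum of the distinct monomials in the row-group orbit of `P`. -/
def rowOrbitSum (N : ℕ) (T : Fin N → ℕ × ℕ) (P : MvPolynomial (Fin N) ℚ) :
    MvPolynomial (Fin N) ℚ :=
  (#((rowGroup N T).filter fun τ : Perm (Fin N) => rename (⇑τ) P = P) : ℚ)⁻¹ •
    symRT N T P

lemma rowPoly_eq_rowOrbitSum (N : ℕ) (f : ℕ → ℕ → ℕ) (T : Fin N → ℕ × ℕ) :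
    rowPoly N f T = rowOrbitSum N T (pmonF N f T) := rfl

lemma FMTF_eq_antisym_rowPoly (N : ℕ) (f : ℕ → ℕ → ℕ) (T : Fin N → ℕ × ℕ) :
    FMTF N f T = antisym N T (rowPoly N f T) := by
  unfold FMTF rowPoly youngSym antisym
  rw [Finset.smul_sum]
  refine Finset.sum_congr rfl fun σ _ => ?_
  rw [map_smul, smul_comm]

variable {N : ℕ} {T : Fin N → ℕ × ℕ} {τ : Perm (Fin N)}

lemma symRT_rename_of_mem (hτ : τ ∈ rowGroup N T) (P : MvPolynomial (Fin N) ℚ) :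
    symRT N T (rename τ P) = symRT N T P := by
  rw [rowGroup_eq_labelPerms] at hτ
  simp only [symRT, rowGroup_eq_labelPerms, rename_rename, ← Equiv.Perm.coe_mul]
  exact sum_labelPerms_mul_right (fun ρ => rename ρ P) hτ

lemma rowOrbitSum_rename_of_mem (hτ : τ ∈ rowGroup N T) (P : MvPolynomial (Fin N) ℚ) :
    rowOrbitSum N T (rename τ P) = rowOrbitSum N T P := by
  have hstab :
      #((rowGroup N T).filter fun ρ : Perm (Fin N) => rename ρ (rename τ P) = rename τ P) =
        #((rowGroup N T).filter fun ρ : Perm (Fin N) => rename ρ P = P) := by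
    rw [rowGroup_eq_labelPerms] at hτ ⊢
    refine card_filter_labelPerms_conj hτ fun ρ => ?_
    have e := (renameEquiv ℚ τ).symm_apply_eq (x := rename ρ (rename τ P)) (y := P)
    simp only [renameEquiv_symm, renameEquiv_apply, rename_rename] at e
    simp only [Equiv.Perm.coe_mul, rename_rename]
    exact e.symm
  rw [rowOrbitSum, rowOrbitSum, hstab, symRT_rename_of_mem hτ]

end RowOrbitSum

section AddBox

variable {n : ℕ} {T : Fin n → ℕ × ℕ} {T' : Fin (n + 1) → ℕ × ℕ}

lemma sum_rowGroup_succ (hT' : ∀ i, T' i.castSucc = T i) {M : Type*} [AddCommMonoid M]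
    (G : Perm (Fin (n + 1)) → M) :
    ∑ ρ ∈ rowGroup (n + 1) T', G ρ =
      ∑ j with (T' j).1 = (T' (Fin.last n)).1,
        ∑ τ ∈ rowGroup n T, G (extendLast n τ * swap (Fin.last n) j) := by
  have h : (fun j => (T' j).1) ∘ Fin.castSucc = fun i => (T i).1 := funext fun i => by simp [hT']
  rw [rowGroup_eq_labelPerms, rowGroup_eq_labelPerms, sum_labelPerms_succ, h]

lemma sum_colGroup_succ (hT' : ∀ i, T' i.castSucc = T i)
    (hcol : ∀ i, (T i).2 ≠ (T' (Fin.last n)).2) {M : Type*} [AddCommMonoid M]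
    (G : Perm (Fin (n + 1)) → M) :
    ∑ σ ∈ colGroup (n + 1) T', G σ = ∑ τ ∈ colGroup n T, G (extendLast n τ) := by
  have h : (fun j => (T' j).2) ∘ Fin.castSucc = fun i => (T i).2 := funext fun i => by simp [hT']
  have hlast : ({j | (T' j).2 = (T' (Fin.last n)).2} : Finset _) = {Fin.last n} := by
    ext j
    cases j using Fin.lastCases <;> simp [hT', hcol]
  simp only [colGroup_eq_labelPerms, sum_labelPerms_succ, h, hlast, Finset.sum_singleton,
    Equiv.swap_self, ← Equiv.Perm.one_def, mul_one]

lemma evalLastZero_antisym (hT' : ∀ i, T' i.castSucc = T i)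
    (hcol : ∀ i, (T i).2 ≠ (T' (Fin.last n)).2) (P : MvPolynomial (Fin (n + 1)) ℚ) :
    evalLastZero n (antisym (n + 1) T' P) = antisym n T (evalLastZero n P) := by
  simp only [antisym, map_sum, sum_colGroup_succ hT' hcol, map_smul, sign_extendLast,
    evalLastZero_rename_extendLast]

lemma evalLastZero_symRT (hT' : ∀ i, T' i.castSucc = T i) (a : Fin (n + 1) → ℕ)
    (ha : a (Fin.last n) = 0) :
    evalLastZero n (symRT (n + 1) T' (∏ j, X j ^ a j)) =
      #{j | (T' j).1 = (T' (Fin.last n)).1 ∧ a j = 0} •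
        symRT n T (∏ i, X i ^ a i.castSucc) := by
  simp only [symRT, map_sum, sum_rowGroup_succ hT', Equiv.Perm.coe_mul, ← rename_rename,
    evalLastZero_rename_extendLast, evalLastZero_rename_swap a ha, apply_ite (rename _), map_zero]
  simp [Finset.sum_ite, Finset.filter_filter, nsmul_eq_mul]

lemma card_stab_succ (hT' : ∀ i, T' i.castSucc = T i) (a : Fin (n + 1) → ℕ)
    (ha : a (Fin.last n) = 0) :
    #((rowGroup (n + 1) T').filter fun ρ : Perm (Fin (n + 1)) =>
        rename ρ (∏ j, X j ^ a j : MvPolynomial _ ℚ) = ∏ j, X j ^ a j) =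
      #{j | (T' j).1 = (T' (Fin.last n)).1 ∧ a j = 0} *
        #((rowGroup n T).filter fun τ : Perm (Fin n) =>
          rename τ (∏ i, X i ^ a i.castSucc : MvPolynomial _ ℚ) =
            ∏ i, X i ^ a i.castSucc) := by
  set p : MvPolynomial (Fin n) ℚ := ∏ i, X i ^ a i.castSucc
  have hp : p ≠ 0 := Finset.prod_ne_zero_iff.mpr fun i _ => pow_ne_zero _ (X_ne_zero i)
  have key : ∀ τ j, rename (extendLast n τ * swap (Fin.last n) j)
      (∏ k, X k ^ a k : MvPolynomial (Fin (n + 1)) ℚ) = ∏ k, X k ^ a k ↔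
        a j = 0 ∧ rename τ p = p := by
    intro τ j
    rw [Equiv.Perm.coe_mul, ← rename_rename]
    constructor
    · -- `evalLastZero` kills the left side unless the exponent of the last variable stays `0`.
      intro h
      have h' := congrArg (evalLastZero n) h
      rw [evalLastZero_rename_extendLast, evalLastZero_rename_swap a ha, evalLastZero_prod_X_pow,
        if_pos ha] at h'
      by_cases hj : a j = 0
      · rw [if_pos hj] at h'
        exact ⟨hj, h'⟩
      · rw [if_neg hj, map_zero] at h'
        exact absurd h'.symm hp
    · rintro ⟨hj, hτ⟩
      rw [rename_swap_prod_X_pow a (ha.trans hj.symm), ← rename_castSucc_prod_X_pow a ha,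
        rename_rename, extendLast_comp_castSucc, ← rename_rename, hτ]
  rw [Finset.card_filter, sum_rowGroup_succ hT']
  simp only [key, ite_and, Finset.sum_ite_irrel, Finset.sum_const_zero, ← Finset.card_filter]
  rw [Finset.sum_ite, Finset.sum_const_zero, add_zero, Finset.sum_const, smul_eq_mul,
    Finset.filter_filter]

lemma evalLastZero_rowOrbitSum (hT' : ∀ i, T' i.castSucc = T i) (f : ℕ → ℕ → ℕ) :
    evalLastZero n (rowOrbitSum (n + 1) T' (rename Fin.castSucc (pmonF n f T))) =
      rowPoly n f T := by
  set a : Fin (n + 1) → ℕ := Fin.snoc (fun i => f (T i).1 (T i).2) 0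
  have ha : a (Fin.last n) = 0 := Fin.snoc_last _ _
  have hae : ∀ i, a i.castSucc = f (T i).1 (T i).2 := Fin.snoc_castSucc _ _
  have hc : 0 < #{j | (T' j).1 = (T' (Fin.last n)).1 ∧ a j = 0} :=
    Finset.card_pos.mpr ⟨Fin.last n, by simp [ha]⟩
  rw [rowPoly_eq_rowOrbitSum, pmonF]
  simp only [← hae]
  rw [rename_castSucc_prod_X_pow a ha, rowOrbitSum, rowOrbitSum, map_smul,
    evalLastZero_symRT hT' a ha, ← Nat.cast_smul_eq_nsmul ℚ, card_stab_succ hT' a ha, smul_smul,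
    Nat.cast_mul]
  congr 1
  have : (#{j | (T' j).1 = (T' (Fin.last n)).1 ∧ a j = 0} : ℚ) ≠ 0 := by
    exact_mod_cast hc.ne'
  field_simp

end AddBox

section Iota

variable {n : ℕ} {lam : YoungDiagram} {T : Fin n → ℕ × ℕ}

@[simp]
lemma iotaT_castSucc (i : Fin n) : iotaT n lam T i.castSucc = T i := by
  simp [iotaT]

@[simp]
lemma iotaT_last : iotaT n lam T (Fin.last n) = (0, lam.rowLen 0) := by
  simp [iotaT]

lemma IsTabloid.snd_lt_rowLen_zero (hT : IsTabloid n lam T) (i : Fin n) :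
    (T i).2 < lam.rowLen 0 :=
  (YoungDiagram.mem_iff_lt_rowLen.mp (hT.2 i)).trans_le (lam.rowLen_anti 0 _ (Nat.zero_le _))

lemma IsTabloid.exists_eq (hT : IsTabloid n lam T) (hcard : lam.card = n) {x : ℕ × ℕ}
    (hx : x ∈ lam) : ∃ i, T i = x := by
  have himg : Finset.univ.image T = lam.cells := by
    refine Finset.eq_of_subset_of_card_le (fun y hy => ?_) ?_
    · obtain ⟨i, _, rfl⟩ := Finset.mem_image.mp hy
      exact hT.2 i
    · rw [Finset.card_image_of_injective _ hT.1, Finset.card_univ, Fintype.card_fin]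
      exact hcard.le
  simpa using himg.ge hx

lemma IsTabloid.ne_zero_rowLen_zero (hT : IsTabloid n lam T) (i : Fin n) :
    T i ≠ (0, lam.rowLen 0) :=
  fun h => (hT.snd_lt_rowLen_zero i).ne (congrArg Prod.snd h)

lemma IsTabloid.injective_iotaT (hT : IsTabloid n lam T) : Function.Injective (iotaT n lam T) := by
  intro j k h
  cases j using Fin.lastCases <;> cases k using Fin.lastCases <;>
    simp_all [hT.1.eq_iff, hT.ne_zero_rowLen_zero, (hT.ne_zero_rowLen_zero _).symm]

def rotRow0 (L : ℕ) (x : ℕ × ℕ) : ℕ × ℕ :=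
  if x.1 = 0 then (0, if x.2 = L then 0 else x.2 + 1) else x

lemma rotRow0_fst (L : ℕ) (x : ℕ × ℕ) : (rotRow0 L x).1 = x.1 := by
  unfold rotRow0
  split_ifs with h <;> simp [h]

lemma rotRow0_injective (L : ℕ) : Function.Injective (rotRow0 L) := by
  rintro ⟨r, c⟩ ⟨r', c'⟩ h
  simp only [rotRow0] at h
  split_ifs at h <;> simp_all

lemma iotaHatFun_rotRow0 (f : ℕ → ℕ → ℕ) (L : ℕ) (x : ℕ × ℕ) :
    iotaHatFun f (rotRow0 L x).1 (rotRow0 L x).2 = if x = (0, L) then 0 else f x.1 x.2 := by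
  obtain ⟨r, c⟩ := x
  simp only [rotRow0, iotaHatFun]
  split_ifs <;> simp_all

lemma rotRow0_mem {x : ℕ × ℕ} (hx : x ∈ lam ∨ x = (0, lam.rowLen 0)) :
    rotRow0 (lam.rowLen 0) x ∈ lam ∨ rotRow0 (lam.rowLen 0) x = (0, lam.rowLen 0) := by
  obtain ⟨r, c⟩ := x
  rcases hx with hx | hx
  · rw [YoungDiagram.mem_iff_lt_rowLen] at hx
    by_cases hr : r = 0
    · subst hr
      simp only [rotRow0, if_pos, YoungDiagram.mem_iff_lt_rowLen, if_neg hx.ne, Prod.mk.injEq,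
        true_and]
      omega
    · simp [rotRow0, hr, YoungDiagram.mem_iff_lt_rowLen, hx]
  · simp only [Prod.mk.injEq] at hx
    obtain ⟨rfl, rfl⟩ := hx
    simp only [rotRow0, if_pos, YoungDiagram.mem_iff_lt_rowLen, Prod.mk.injEq, true_and]
    omega

lemma exists_mem_rowGroup_pmonF_iotaHatFun (hT : IsTabloid n lam T) (hcard : lam.card = n)
    (f : ℕ → ℕ → ℕ) : ∃ τ ∈ rowGroup (n + 1) (iotaT n lam T),
      pmonF (n + 1) (iotaHatFun f) (iotaT n lam T) =
        rename τ (rename Fin.castSucc (pmonF n f T)) := by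
  have hcells : ∀ j, iotaT n lam T j ∈ lam ∨ iotaT n lam T j = (0, lam.rowLen 0) :=
    Fin.lastCases (by simp) fun i => by simp [hT.2 i]
  have hmaps : ∀ j, ∃ k, iotaT n lam T k = rotRow0 (lam.rowLen 0) (iotaT n lam T j) := by
    intro j
    rcases rotRow0_mem (hcells j) with h | h
    · obtain ⟨i, hi⟩ := hT.exists_eq hcard h
      exact ⟨i.castSucc, by rw [iotaT_castSucc, hi]⟩
    · exact ⟨Fin.last n, by rw [iotaT_last, h]⟩
  obtain ⟨τ, hτ⟩ := exists_perm_comp_eq hT.injective_iotaT (rotRow0_injective _) hmaps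
  let a : Fin (n + 1) → ℕ := fun j =>
    iotaHatFun f (iotaT n lam T (τ j)).1 (iotaT n lam T (τ j)).2
  have ha : a (Fin.last n) = 0 := by simp [a, hτ, iotaHatFun_rotRow0]
  have hae : ∀ i, a i.castSucc = f (T i).1 (T i).2 := fun i => by
    simp [a, hτ, iotaHatFun_rotRow0, hT.ne_zero_rowLen_zero]
  refine ⟨τ, ?_, ?_⟩
  · rw [rowGroup_eq_labelPerms, mem_labelPerms]
    intro j
    rw [hτ, rotRow0_fst]
  · rw [pmonF, pmonF]
    simp only [← hae]
    rw [rename_castSucc_prod_X_pow a ha, rename_prod_X_pow]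
    simp [a]

end Iota

theorem stmt17_general (n : ℕ) (lam : YoungDiagram) (hcard : lam.card = n)
    (M : SemistandardYoungTableau lam) (T : Fin n → ℕ × ℕ) (hT : IsTabloid n lam T) :
    FMTF (n + 1) (iotaHatFun (entryFun M)) (iotaT n lam T) =
      (stabCardF (n + 1) (iotaHatFun (entryFun M)) (iotaT n lam T) : ℚ)⁻¹ •
        youngSym (n + 1) (iotaT n lam T)
          (rename (fun i : Fin n => (Fin.castSucc i)) (pmonF n (entryFun M) T)) ∧
    (aeval fun i : Fin (n + 1) =>
        if h : (i : ℕ) < n then (X (⟨(i : ℕ), h⟩ : Fin n) : MvPolynomial (Fin n) ℚ) else 0)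
      (FMTF (n + 1) (iotaHatFun (entryFun M)) (iotaT n lam T)) = FMT n M T := by
  have hT' : ∀ i, iotaT n lam T i.castSucc = T i := iotaT_castSucc
  have hcol : ∀ i, (T i).2 ≠ (iotaT n lam T (Fin.last n)).2 := fun i => by
    simpa using (hT.snd_lt_rowLen_zero i).ne
  obtain ⟨τ, hτ, hmon⟩ := exists_mem_rowGroup_pmonF_iotaHatFun hT hcard (entryFun M)
  refine ⟨?_, ?_⟩
  · rw [FMTF, youngSym, youngSym, hmon, symRT_rename_of_mem hτ]
  · change evalLastZero n _ = _
    rw [FMTF_eq_antisym_rowPoly, rowPoly_eq_rowOrbitSum, hmon, rowOrbitSum_rename_of_mem hτ,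
      evalLastZero_antisym hT' hcol, evalLastZero_rowOrbitSum hT', FMT, FMTF_eq_antisym_rowPoly]

theorem stmt17 (n : ℕ) (hn : 1 ≤ n) (lam : YoungDiagram) (hcard : lam.card = n)
    (M : SemistandardYoungTableau lam) (T : Fin n → ℕ × ℕ) (hT : IsTabloid n lam T) :
    FMTF (n + 1) (iotaHatFun (entryFun M)) (iotaT n lam T) =
      (stabCardF (n + 1) (iotaHatFun (entryFun M)) (iotaT n lam T) : ℚ)⁻¹ •
        youngSym (n + 1) (iotaT n lam T)
          (rename (fun i : Fin n => (Fin.castSucc i)) (pmonF n (entryFun M) T)) ∧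
    (aeval fun i : Fin (n + 1) =>
        if h : (i : ℕ) < n then (X (⟨(i : ℕ), h⟩ : Fin n) : MvPolynomial (Fin n) ℚ) else 0)
      (FMTF (n + 1) (iotaHatFun (entryFun M)) (iotaT n lam T)) = FMT n M T :=
  stmt17_general n lam hcard M T hT

end GHS
end
end

section
/- For any partition λ ⊢ n, any semistandard tableau M of shape λ with nonnegative entries, and any tableau T of shape λ with content {1,...,n}: the multiset Dsp^c(M +̂ v) equals Dsp^c(M) if δ_{M,v} = 1, and equals the multiset sum of Dsp^c(M) and {n} if δ_{M,v} = 0; moreover Σ(M +̂ v) = Σ(M) in the first case and Σ(M) + n in the second, and F_{M₊,T} = e_n·F_{M,T} where M₊ adds 1 to every entry of M and e_n = x_1···x_n. -/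
open MvPolynomial

noncomputable section
open scoped Classical

namespace GHS

/-!
Write `M = ct_J(S)` with `S` standard. The hat-addition is `ct_{J'}(S')`, where `S'` (the
evacuation of `ev(S)` with `n + 1` placed at `v`) is again standard, because every jeu de taquin
slide only transposes entries; `J'` is `J` shifted by one, together with an extra `1` when
`δ_{M,v} = 0`. For a standard `S` with `N` cells, `Dsp^c(ct_J S) = {N - j | j ∈ J, j < N}`:
the entries of `ct_J S` are the values of the counting function of `J`, and the numbers of
entries below `h` recover `J` as its generalized inverse. The entry sum is always the sum of
`Dsp^c`. Finally, adding one to every entry multiplies the monomial by `e_n`, which is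
symmetric, so it commutes with the Young symmetrizer and does not change the stabilizer.
-/

lemma updF_apply_self (f : ℕ → ℕ → ℕ) (r c a : ℕ) : updF f r c a r c = a := by
  simp [updF]

lemma updF_apply_of_ne (f : ℕ → ℕ → ℕ) (r c a : ℕ) {p : ℕ × ℕ} (hp : p ≠ (r, c)) :
    updF f r c a p.1 p.2 = f p.1 p.2 := by
  simp only [updF, if_neg (fun h : p.1 = r ∧ p.2 = c => hp (Prod.ext h.1 h.2))]

def HasSupport (s : Finset (ℕ × ℕ)) (f : ℕ → ℕ → ℕ) : Prop :=
  ∀ p : ℕ × ℕ, f p.1 p.2 ≠ 0 ↔ p ∈ s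

def cellValues (s : Finset (ℕ × ℕ)) (f : ℕ → ℕ → ℕ) : Multiset ℕ :=
  s.val.map fun p => f p.1 p.2

lemma HasSupport.updF_zero {s : Finset (ℕ × ℕ)} {f : ℕ → ℕ → ℕ} (hf : HasSupport s f)
    (q : ℕ × ℕ) : HasSupport (s.erase q) (updF f q.1 q.2 0) := by
  intro p
  by_cases hpq : p = q
  · subst hpq
    simp [updF_apply_self]
  · rw [updF_apply_of_ne _ _ _ _ hpq, hf p, Finset.mem_erase, and_iff_right hpq]

lemma HasSupport.updF_of_ne_zero {s : Finset (ℕ × ℕ)} {f : ℕ → ℕ → ℕ} (hf : HasSupport s f)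
    (q : ℕ × ℕ) {a : ℕ} (ha : a ≠ 0) : HasSupport (insert q s) (updF f q.1 q.2 a) := by
  intro p
  by_cases hpq : p = q
  · subst hpq
    simpa [updF_apply_self] using ha
  · rw [updF_apply_of_ne _ _ _ _ hpq, hf p, Finset.mem_insert, or_iff_right hpq]

lemma cellValues_insert_updF {s : Finset (ℕ × ℕ)} {q : ℕ × ℕ} (hq : q ∉ s)
    (f : ℕ → ℕ → ℕ) (a : ℕ) :
    cellValues (insert q s) (updF f q.1 q.2 a) = a ::ₘ cellValues s f := by
  rw [cellValues, Finset.insert_val_of_notMem hq, Multiset.map_cons, updF_apply_self]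
  congr 1
  exact Multiset.map_congr rfl fun p hp =>
    updF_apply_of_ne _ _ _ _ (ne_of_mem_of_not_mem (Finset.mem_def.2 hp) hq)

lemma add_lt_card_of_isLowerSet {s : Finset (ℕ × ℕ)} (hs : IsLowerSet (s : Set (ℕ × ℕ)))
    {p : ℕ × ℕ} (hp : p ∈ s) : p.1 + p.2 < s.card := by
  have h := Finset.card_le_card fun q (hq : q ∈ Finset.Iic p) => hs (Finset.mem_Iic.1 hq) hp
  rw [Finset.card_Iic_prod, Nat.card_Iic, Nat.card_Iic] at h
  nlinarith

lemma isLowerSet_erase_of_corner {s : Finset (ℕ × ℕ)} (hs : IsLowerSet (s : Set (ℕ × ℕ)))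
    {q : ℕ × ℕ} (hdown : (q.1 + 1, q.2) ∉ s) (hright : (q.1, q.2 + 1) ∉ s) :
    IsLowerSet (↑(s.erase q) : Set (ℕ × ℕ)) := by
  intro a b hba ha
  rw [Finset.coe_erase, Set.mem_sdiff, Finset.mem_coe, Set.mem_singleton_iff] at ha ⊢
  refine ⟨hs hba ha.1, ?_⟩
  rintro rfl
  obtain ⟨h1, h2⟩ := Prod.mk_le_mk.1 hba
  rcases Nat.lt_or_ge b.1 a.1 with h | h
  · exact hdown (hs (Prod.mk_le_mk.2 ⟨h, h2⟩) ha.1)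
  · refine hright (hs (Prod.mk_le_mk.2 ⟨h1, Nat.lt_of_le_of_ne h2 fun h' => ha.2 ?_⟩) ha.1)
    exact Prod.ext (by omega) h'.symm

-- The double update is the transposition of the hole `(r, c)` with `t`.
lemma slide_step {s : Finset (ℕ × ℕ)} {f : ℕ → ℕ → ℕ} {r c : ℕ} {t : ℕ × ℕ}
    (hrc : (r, c) ∈ s) (ht : t ∈ s) (hf : HasSupport (s.erase (r, c)) f) :
    HasSupport (s.erase t) (updF (updF f r c (f t.1 t.2)) t.1 t.2 0) ∧
      cellValues (s.erase t) (updF (updF f r c (f t.1 t.2)) t.1 t.2 0) =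
        cellValues (s.erase (r, c)) f := by
  set σ := Equiv.swap t (r, c)
  have hswap : ∀ p : ℕ × ℕ,
      updF (updF f r c (f t.1 t.2)) t.1 t.2 0 p.1 p.2 = f (σ p).1 (σ p).2 := by
    intro p
    by_cases hpt : p = t
    · subst hpt
      rw [updF_apply_self, Equiv.swap_apply_left]
      by_contra h
      simpa using (hf (r, c)).1 (Ne.symm h)
    by_cases hprc : p = (r, c)
    · subst hprc
      rw [updF_apply_of_ne _ _ _ _ hpt, updF_apply_self, Equiv.swap_apply_right]
    · rw [updF_apply_of_ne _ _ _ _ hpt, updF_apply_of_ne _ _ _ _ hprc,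
        Equiv.swap_apply_of_ne_of_ne hpt hprc]
  have hmap : (s.erase t).map σ.toEmbedding = s.erase (r, c) := by
    rw [Finset.map_erase, Equiv.coe_toEmbedding, Equiv.swap_apply_left]
    congr 1
    refine Finset.map_perm fun p hp => ?_
    rcases Equiv.eq_or_eq_of_swap_apply_ne_self hp with rfl | rfl <;> assumption
  refine ⟨fun p => ?_, ?_⟩
  · rw [hswap, hf, ← hmap, Finset.mem_map_equiv, Equiv.symm_apply_apply]
  · rw [cellValues, cellValues, ← hmap, Finset.map_val, Multiset.map_map]
    exact Multiset.map_congr rfl fun p _ => hswap p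

lemma exists_slide_succ_eq (fuel : ℕ) (f : ℕ → ℕ → ℕ) (r c : ℕ)
    (h : ¬(f (r + 1) c = 0 ∧ f r (c + 1) = 0)) :
    ∃ t : ℕ × ℕ, f t.1 t.2 ≠ 0 ∧ t.1 + t.2 = r + c + 1 ∧
      slide (fuel + 1) f (r, c) = slide fuel (updF (updF f r c (f t.1 t.2)) t.1 t.2 0) t := by
  simp only [slide, if_neg h]
  split_ifs with hdown
  · exact ⟨(r + 1, c), fun h0 => h ⟨h0, hdown.resolve_right (fun h' => h'.1 h0)⟩, by omega, rfl⟩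
  · exact ⟨(r, c + 1), fun h0 => hdown (Or.inl h0), by omega, rfl⟩

lemma isLowerSet_erase_of_hasSupport {s : Finset (ℕ × ℕ)} (hs : IsLowerSet (s : Set (ℕ × ℕ)))
    {f : ℕ → ℕ → ℕ} {r c : ℕ} (hf : HasSupport (s.erase (r, c)) f) (hdown : f (r + 1) c = 0)
    (hright : f r (c + 1) = 0) :
    IsLowerSet (↑(s.erase (r, c)) : Set (ℕ × ℕ)) := by
  refine isLowerSet_erase_of_corner hs (fun h => ?_) (fun h => ?_)
  · exact (hf (r + 1, c)).2 (Finset.mem_erase.2 ⟨by simp, h⟩) hdown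
  · exact (hf (r, c + 1)).2 (Finset.mem_erase.2 ⟨by simp, h⟩) hright

-- The fuel suffices because every step increases `r + c`, which stays below `s.card`.
lemma slide_spec {s : Finset (ℕ × ℕ)} (hs : IsLowerSet (s : Set (ℕ × ℕ))) (fuel : ℕ)
    (f : ℕ → ℕ → ℕ) (r c : ℕ) (hrc : (r, c) ∈ s) (hf : HasSupport (s.erase (r, c)) f)
    (hcard : s.card ≤ fuel + r + c + 1) :
    ∃ g q, slide fuel f (r, c) = (g, q) ∧ q ∈ s ∧ IsLowerSet (↑(s.erase q) : Set (ℕ × ℕ)) ∧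
      HasSupport (s.erase q) g ∧ cellValues (s.erase q) g = cellValues (s.erase (r, c)) f := by
  induction fuel generalizing f r c with
  | zero =>
    have hcorner : ∀ p : ℕ × ℕ, p.1 + p.2 = r + c + 1 → f p.1 p.2 = 0 := fun p hp => by
      by_contra h
      have := add_lt_card_of_isLowerSet hs (Finset.mem_of_mem_erase ((hf p).1 h))
      omega
    exact ⟨f, (r, c), rfl, hrc, isLowerSet_erase_of_hasSupport hs hf
      (hcorner (r + 1, c) (by dsimp only; omega)) (hcorner (r, c + 1) (by dsimp only; omega)),
      hf, rfl⟩
  | succ fuel ih =>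
    by_cases hstop : f (r + 1) c = 0 ∧ f r (c + 1) = 0
    · refine ⟨f, (r, c), by simp [slide, hstop], hrc,
        isLowerSet_erase_of_hasSupport hs hf hstop.1 hstop.2, hf, rfl⟩
    obtain ⟨t, hft, hrct, hslide⟩ := exists_slide_succ_eq fuel f r c hstop
    have ht : t ∈ s := Finset.mem_of_mem_erase ((hf t).1 hft)
    obtain ⟨hf', hvalues⟩ := slide_step hrc ht hf
    obtain ⟨g, q, heq, hq, hlow, hg, hgvalues⟩ := ih _ t.1 t.2 ht hf' (by omega)
    exact ⟨g, q, hslide.trans heq, hq, hlow, hg, hgvalues.trans hvalues⟩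

lemma evacAux_spec {s : Finset (ℕ × ℕ)} (hs : IsLowerSet (s : Set (ℕ × ℕ))) (f : ℕ → ℕ → ℕ)
    (hf : HasSupport s f) :
    HasSupport s (evacAux s.card f) ∧
      cellValues s (evacAux s.card f) = (Multiset.range s.card).map (· + 1) := by
  induction hcard : s.card generalizing s f with
  | zero =>
    obtain rfl := Finset.card_eq_zero.1 hcard
    exact ⟨fun p => by simp [evacAux], rfl⟩
  | succ m ih =>
    obtain ⟨p, hp⟩ := Finset.card_pos.1 (by omega : 0 < s.card)
    have h00 : ((0, 0) : ℕ × ℕ) ∈ s := hs (Prod.mk_le_mk.2 ⟨Nat.zero_le _, Nat.zero_le _⟩) hp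
    obtain ⟨g, q, heq, hq, hlow, hg, hgvalues⟩ :=
      slide_spec hs (m + 1) _ 0 0 h00 (hf.updF_zero (0, 0)) (by omega)
    have hevac : evacAux (m + 1) f = updF (evacAux m g) q.1 q.2 (m + 1) := by
      simp only [evacAux, heq]
    obtain ⟨hsupp, hvalues⟩ := ih hlow g hg (by rw [Finset.card_erase_of_mem hq, hcard]; rfl)
    rw [hevac, ← Finset.insert_erase hq]
    exact ⟨hsupp.updF_of_ne_zero q m.succ_ne_zero, by
      rw [cellValues_insert_updF (Finset.notMem_erase q s), hvalues, Multiset.range_succ,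
        Multiset.map_cons]⟩

lemma entryMultisetF_evacAux_insert {n : ℕ} {lam ν : YoungDiagram} (f : ℕ → ℕ → ℕ) {v : ℕ × ℕ}
    (hcard : lam.card = n) (hv : v ∉ lam.cells) (hν : ν.cells = insert v lam.cells) :
    entryMultisetF ν (evacAux (n + 1) (updF (evacAux n (stdFun lam f)) v.1 v.2 (n + 1))) =
      (Multiset.range (n + 1)).map (· + 1) := by
  have hstd : HasSupport lam.cells (stdFun lam f) := fun p => by simp [stdFun]
  have hlam : lam.cells.card = n := hcard
  have hνcard : ν.cells.card = n + 1 := by rw [hν, Finset.card_insert_of_notMem hv, hlam]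
  obtain ⟨hS, -⟩ := evacAux_spec lam.isLowerSet _ hstd
  rw [hlam] at hS
  have := (evacAux_spec ν.isLowerSet _ (hν ▸ hS.updF_of_ne_zero v n.succ_ne_zero)).2
  rwa [hνcard] at this

lemma val_Icc_one (m : ℕ) : (Finset.Icc 1 m).val = (Multiset.range m).map (· + 1) := by
  simp [Nat.Icc_eq_range', List.range'_eq_map_range, add_comm]
  rfl

lemma countLtF_eq_countP (μ : YoungDiagram) (f : ℕ → ℕ → ℕ) (h : ℕ) :
    countLtF μ f h = (entryMultisetF μ f).countP (· < h) := by
  rw [entryMultisetF, Multiset.countP_map]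
  rfl

lemma DspCF_eq_map_entryMultisetF (n : ℕ) (μ : YoungDiagram) (f : ℕ → ℕ → ℕ) :
    DspCF n μ f = (Finset.Icc 1 (entryMultisetF μ f).sup).val.map
      fun h => n - (entryMultisetF μ f).countP (· < h) := by
  simp only [DspCF, countLtF_eq_countP]
  rfl

lemma monotone_countP_lt (J : Multiset ℕ) : Monotone fun a => J.countP (· < a) := by
  intro a b hab
  simp only [Multiset.countP_eq_card_filter]
  exact Multiset.card_le_card (Multiset.monotone_filter_right J fun x hx => lt_of_lt_of_le hx hab)

lemma filter_lt_add_one (J : Multiset ℕ) (N : ℕ) :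
    J.filter (· < N + 1) = J.filter (· < N) + Multiset.replicate (J.count N) N := by
  ext x
  simp only [Multiset.count_add, Multiset.count_filter, Multiset.count_replicate]
  split_ifs <;> subst_vars <;> omega

-- The entries of `ct_J S` for a standard filling `S` with entries `1, …, N`.
def ctValues (J : Multiset ℕ) (N : ℕ) : Multiset ℕ :=
  (Multiset.range N).map fun v => J.countP (· < v + 1)

lemma le_of_mem_ctValues {J : Multiset ℕ} {N x : ℕ} (hx : x ∈ ctValues J N) :
    x ≤ J.countP (· < N) := by
  obtain ⟨v, hv, rfl⟩ := Multiset.mem_map.1 hx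
  exact monotone_countP_lt J (Multiset.mem_range.1 hv)

lemma sup_ctValues (J : Multiset ℕ) (N : ℕ) : (ctValues J N).sup = J.countP (· < N) := by
  refine le_antisymm (Multiset.sup_le.2 fun x hx => le_of_mem_ctValues hx) ?_
  rcases N with _ | N
  · simp
  · exact Multiset.le_sup (Multiset.mem_map.2 ⟨N, Multiset.mem_range.2 N.lt_succ_self, rfl⟩)

-- `k ↦ #{v < N | #{j ∈ J | j ≤ v} ≤ k}` is the generalized inverse of the counting function
-- of `J`, so it lists the elements of `J` below `N` in increasing order.
lemma map_countP_ctValues (J : Multiset ℕ) (N : ℕ) :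
    (Multiset.range (J.countP (· < N))).map (fun k => (ctValues J N).countP (· < k + 1)) =
      J.filter (· < N) := by
  induction N with
  | zero => simp
  | succ N ih =>
    have hcount : J.countP (· < N + 1) = J.countP (· < N) + J.count N := by
      rw [Multiset.countP_eq_card_filter, filter_lt_add_one, Multiset.card_add,
        Multiset.card_replicate, Multiset.countP_eq_card_filter]
    have hsucc : ctValues J (N + 1) = J.countP (· < N + 1) ::ₘ ctValues J N := by
      rw [ctValues, Multiset.range_succ, Multiset.map_cons]
      rfl
    rw [filter_lt_add_one, ← ih, hcount, Multiset.range_add, Multiset.map_add]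
    congr 1
    · refine Multiset.map_congr rfl fun k hk => ?_
      rw [hsucc, Multiset.countP_cons_of_neg _ (by have := Multiset.mem_range.1 hk; omega)]
    · have hN : ∀ i ∈ Multiset.range (J.count N),
          (ctValues J (N + 1)).countP (· < J.countP (· < N) + i + 1) = N := by
        intro i hi
        rw [hsucc, Multiset.countP_cons_of_neg _ (by have := Multiset.mem_range.1 hi; omega),
          Multiset.countP_eq_card.2, ctValues, Multiset.card_map, Multiset.card_range]
        exact fun x hx => Nat.lt_succ_of_le ((le_of_mem_ctValues hx).trans (Nat.le_add_right _ _))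
      rw [Multiset.map_map]
      refine (Multiset.map_congr rfl hN).trans ?_
      rw [Multiset.map_const', Multiset.card_range]

lemma DspCF_ctJfun {N : ℕ} {ν : YoungDiagram} {F : ℕ → ℕ → ℕ}
    (hF : entryMultisetF ν F = (Multiset.range N).map (· + 1)) (J : Multiset ℕ) :
    DspCF N ν (ctJfun J F) = (J.filter (· < N)).map (N - ·) := by
  have hvalues : entryMultisetF ν (ctJfun J F) = ctValues J N := by
    have := congrArg (Multiset.map fun v => J.countP (· < v)) hF
    simpa only [entryMultisetF, Multiset.map_map, ctValues, ctJfun, Function.comp_def] using this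
  rw [DspCF_eq_map_entryMultisetF, hvalues, sup_ctValues, val_Icc_one, Multiset.map_map,
    ← map_countP_ctValues, Multiset.map_map]
  rfl

lemma DspCF_eq_map_JminF (n : ℕ) (μ : YoungDiagram) (f : ℕ → ℕ → ℕ) :
    DspCF n μ f = (JminF μ f).map (n - ·) := by
  rw [DspCF, JminF, Multiset.map_map]
  rfl

lemma lt_card_of_mem_JminF {μ : YoungDiagram} {f : ℕ → ℕ → ℕ} {j : ℕ} (hj : j ∈ JminF μ f) :
    j < μ.card := by
  obtain ⟨h, hh, rfl⟩ := Multiset.mem_map.1 hj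
  rw [Finset.mem_val, Finset.mem_Icc] at hh
  obtain ⟨c, hc, hle⟩ := (Finset.le_sup_iff (by rw [Nat.bot_eq_zero]; omega : ⊥ < h)).1 hh.2
  exact Finset.card_lt_card (Finset.filter_ssubset.2 ⟨c, hc, not_lt.2 hle⟩)

-- Summing `Dsp^c` counts each cell `c` once for every `1 ≤ h ≤ f c`.
lemma entrySumF_eq_sum_DspCF (μ : YoungDiagram) (f : ℕ → ℕ → ℕ) :
    entrySumF μ f = (DspCF μ.card μ f).sum := by
  have hcompl : ∀ h, μ.card - countLtF μ f h = (μ.cells.filter fun c => h ≤ f c.1 c.2).card := by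
    intro h
    have := μ.cells.card_filter_add_card_filter_not (fun c => f c.1 c.2 < h)
    simp only [not_lt] at this
    rw [countLtF, YoungDiagram.card, ← this, Nat.add_sub_cancel_left]
  rw [DspCF, Finset.sum_map_val]
  simp only [hcompl, Finset.card_filter]
  rw [Finset.sum_comm, entrySumF]
  refine Finset.sum_congr rfl fun c hc => ?_
  have hle : f c.1 c.2 ≤ maxEntryF μ f := Finset.le_sup (f := fun c : ℕ × ℕ => f c.1 c.2) hc
  have hIcc : (Finset.Icc 1 (maxEntryF μ f)).filter (· ≤ f c.1 c.2) = Finset.Icc 1 (f c.1 c.2) := by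
    ext h
    simp only [Finset.mem_filter, Finset.mem_Icc]
    omega
  rw [← Finset.card_filter, hIcc, Nat.card_Icc, Nat.add_sub_cancel]

lemma isSymmetric_prod_X (n : ℕ) : (∏ i : Fin n, (X i : MvPolynomial (Fin n) ℚ)).IsSymmetric :=
  fun σ => by rw [map_prod]; simp only [rename_X]; exact Equiv.prod_comp σ fun i => X i

lemma pmonF_plusOneF {n : ℕ} {lam : YoungDiagram} (f : ℕ → ℕ → ℕ) {T : Fin n → ℕ × ℕ}
    (hT : ∀ i, T i ∈ lam) :
    pmonF n (plusOneF lam f) T = pmonF n f T * ∏ i : Fin n, X i := by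
  rw [pmonF, pmonF, ← Finset.prod_mul_distrib]
  refine Finset.prod_congr rfl fun i _ => ?_
  rw [plusOneF, if_pos (hT i), pow_succ]

lemma stabCardF_plusOneF {n : ℕ} {lam : YoungDiagram} (f : ℕ → ℕ → ℕ) {T : Fin n → ℕ × ℕ}
    (hT : ∀ i, T i ∈ lam) :
    stabCardF n (plusOneF lam f) T = stabCardF n f T := by
  have hX : (∏ i : Fin n, (X i : MvPolynomial (Fin n) ℚ)) ≠ 0 :=
    Finset.prod_ne_zero_iff.2 fun i _ => X_ne_zero i
  simp only [stabCardF, pmonF_plusOneF f hT, map_mul, isSymmetric_prod_X n _,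
    mul_left_inj' hX]

lemma symRT_mul_of_isSymmetric {n : ℕ} (T : Fin n → ℕ × ℕ) (p : MvPolynomial (Fin n) ℚ)
    {q : MvPolynomial (Fin n) ℚ} (hq : q.IsSymmetric) :
    symRT n T (p * q) = symRT n T p * q := by
  simp only [symRT, Finset.sum_mul, map_mul, hq _]

lemma antisym_mul_of_isSymmetric {n : ℕ} (T : Fin n → ℕ × ℕ) (p : MvPolynomial (Fin n) ℚ)
    {q : MvPolynomial (Fin n) ℚ} (hq : q.IsSymmetric) :
    antisym n T (p * q) = antisym n T p * q := by
  simp only [antisym, Finset.sum_mul, map_mul, hq _, smul_mul_assoc]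

lemma FMTF_plusOneF {n : ℕ} {lam : YoungDiagram} (f : ℕ → ℕ → ℕ) {T : Fin n → ℕ × ℕ}
    (hT : ∀ i, T i ∈ lam) :
    FMTF n (plusOneF lam f) T = (∏ i : Fin n, X i) * FMTF n f T := by
  rw [FMTF, FMTF, youngSym, youngSym, stabCardF_plusOneF f hT, pmonF_plusOneF f hT,
    symRT_mul_of_isSymmetric T _ (isSymmetric_prod_X n),
    antisym_mul_of_isSymmetric T _ (isSymmetric_prod_X n), ← smul_mul_assoc, mul_comm]

theorem stmt19 (n : ℕ) (hn : 1 ≤ n) (lam : YoungDiagram) (hcard : lam.card = n)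
    (M : SemistandardYoungTableau lam) (T : Fin n → ℕ × ℕ) (hT : IsTabloid n lam T)
    (v : ℕ × ℕ) (hv : v ∉ lam.cells) (ν : YoungDiagram) (hν : ν.cells = insert v lam.cells) :
    (deltaOne n lam (entryFun M) v →
      DspCF (n + 1) ν (hatAdd n lam (entryFun M) v) = DspC n M ∧
      entrySumF ν (hatAdd n lam (entryFun M) v) = entrySum M) ∧
    (¬ deltaOne n lam (entryFun M) v →
      DspCF (n + 1) ν (hatAdd n lam (entryFun M) v) = n ::ₘ DspC n M ∧
      entrySumF ν (hatAdd n lam (entryFun M) v) = entrySum M + n) ∧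
    FMTF n (plusOneF lam (entryFun M)) T =
      (∏ i : Fin n, (X i : MvPolynomial (Fin n) ℚ)) * FMT n M T := by
  have hS := entryMultisetF_evacAux_insert (entryFun M) hcard hv hν
  have hνcard : ν.card = n + 1 := by
    rw [YoungDiagram.card, hν, Finset.card_insert_of_notMem hv]
    exact congrArg (· + 1) hcard
  have hsum : ∀ f, entrySumF ν f = (DspCF (n + 1) ν f).sum := hνcard ▸ entrySumF_eq_sum_DspCF ν
  have hsumM : entrySum M = (DspC n M).sum := hcard ▸ entrySumF_eq_sum_DspCF lam _
  have hshift : (((JminF lam (entryFun M)).map (· + 1)).filter (· < n + 1)).map (n + 1 - ·) =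
      DspC n M := by
    rw [Multiset.filter_eq_self.2 fun j hj => ?_, Multiset.map_map, DspC, DspCF_eq_map_JminF]
    · exact Multiset.map_congr rfl fun j _ => by simp
    · obtain ⟨i, hi, rfl⟩ := Multiset.mem_map.1 hj
      have := lt_card_of_mem_JminF hi
      omega
  refine ⟨fun hδ => ?_, fun hδ => ?_, FMTF_plusOneF _ hT.2⟩
  · have hD : DspCF (n + 1) ν (hatAdd n lam (entryFun M) v) = DspC n M := by
      simp only [hatAdd, if_pos hδ]
      rw [DspCF_ctJfun hS, hshift]
    exact ⟨hD, by rw [hsum, hD, hsumM]⟩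
  · have hD : DspCF (n + 1) ν (hatAdd n lam (entryFun M) v) = n ::ₘ DspC n M := by
      simp only [hatAdd, if_neg hδ]
      rw [DspCF_ctJfun hS, Multiset.filter_cons_of_pos _ (by omega), Multiset.map_cons, hshift,
        Nat.add_sub_cancel]
    exact ⟨hD, by rw [hsum, hD, Multiset.sum_cons, hsumM, add_comm]⟩

end GHS
end
end
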